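/- arXiv:1807.11832 — 9 statements merged into one kernel-verified Lean document; each statement's English description precedes it below -/
import Mathlib

section
/- Every finite directed acyclic graph has a kernel. -/
variable {A : Type*}

def Digraph.IsKernel (E : A → A → Prop) (K : Set A) : Prop :=
  ∀ a, a ∈ K ↔ ∀ b, E a b → b ∉ K

def Digraph.iterRel (E : A → A → Prop) : ℕ → A → A → Prop
  | 0 => fun x y => x = y
  | n + 1 => fun x y => ∃ z, E x z ∧ Digraph.iterRel E n z y

def Digraph.IsDAG (E : A → A → Prop) : Prop :=
  ∀ n a, Digraph.iterRel E n a a → n = 0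

def Digraph.WellFoundedDig (E : A → A → Prop) : Prop :=
  ∀ S : Set A, S.Nonempty → ∃ b ∈ S, ∀ c ∈ S, ¬ E b c

def Digraph.WellFoundedOn (E : A → A → Prop) (B : Set A) : Prop :=
  ∀ S : Set A, S ⊆ B → S.Nonempty → ∃ b ∈ S, ∀ c ∈ S, ¬ E b c

def Digraph.ClosedSet (E : A → A → Prop) (D : Set A) : Prop :=
  ∀ d ∈ D, ∀ a, E d a → a ∈ D

def Digraph.IsKernelOn (E : A → A → Prop) (B : Set A) (K : Set A) : Prop :=
  K ⊆ B ∧ ∀ b ∈ B, (b ∈ K ↔ ∀ c ∈ B, E b c → c ∉ K)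

def Digraph.Cl (E : A → A → Prop) (X : Set A) : ℕ → Set A
  | 0 => X
  | k + 1 => X ∪ {a | ∃ d ∈ Digraph.Cl E X k, E d a}

def Digraph.restrict (E : A → A → Prop) (B : Set A) : A → A → Prop :=
  fun x y => x ∈ B ∧ y ∈ B ∧ E x y

def Digraph.HtLe (E : A → A → Prop) (B : Set A) (k : ℕ) : Prop :=
  ∀ a b, ¬ Digraph.iterRel (Digraph.restrict E B) (k + 1) a b

def Digraph.LocalFiniteHeight (E : A → A → Prop) : Prop :=
  ∀ m : ℕ, ∃ k : ℕ, ∀ F : Set A, F.Finite → F.ncard ≤ m →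
    Digraph.HtLe E (Digraph.Cl E F m) k

lemma transGen_iterRel {E : A → A → Prop} {x y : A} (h : Relation.TransGen E x y) :
    ∃ n, 0 < n ∧ Digraph.iterRel E n x y := by
  induction h using Relation.TransGen.head_induction_on with
  | single hx => exact ⟨1, Nat.one_pos, _, hx, rfl⟩
  | head hx _ ih =>
    obtain ⟨n, hn, hit⟩ := ih
    exact ⟨n + 1, Nat.succ_pos _, _, hx, hit⟩

theorem finite_dag_has_kernel {A : Type*} [Finite A] (E : A → A → Prop)
    (h : Digraph.IsDAG E) : ∃ K : Set A, Digraph.IsKernel E K := by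
  have irr : ∀ a, ¬ Relation.TransGen E a a := by
    intro a ha
    obtain ⟨n, hn, hit⟩ := transGen_iterRel ha
    exact absurd (h n a hit) (Nat.pos_iff_ne_zero.mp hn)
  haveI : IsTrans A (fun b a => Relation.TransGen E a b) :=
    ⟨fun _ _ _ h1 h2 => h2.trans h1⟩
  haveI : IsIrrefl A (fun b a => Relation.TransGen E a b) := ⟨fun a ha => irr a ha⟩
  have wf' : WellFounded (fun b a => Relation.TransGen E a b) :=
    Finite.wellFounded_of_trans_of_irrefl _
  have wf : WellFounded (fun b a => E a b) :=
    Subrelation.wf (fun hab => Relation.TransGen.single hab) wf'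
  set K : A → Prop := WellFounded.fix wf
    (fun a (ih : ∀ b, E a b → Prop) => ∀ b (hb : E a b), ¬ ih b hb) with hK
  have hKeq : ∀ a, K a = ∀ b (_ : E a b), ¬ K b := by
    intro a
    rw [hK, WellFounded.fix_eq]
  refine ⟨{a | K a}, fun a => ?_⟩
  constructor
  · intro ha b hb hbK
    rw [Set.mem_setOf_eq, hKeq a] at ha
    exact ha b hb hbK
  · intro ha
    rw [Set.mem_setOf_eq, hKeq a]
    exact fun b hb hbK => ha b hb hbK
end

section
/- Every finite directed acyclic graph has a unique kernel. -/
variable {A : Type*}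

lemma iter_tail {E : A → A → Prop} {n : ℕ} {a b c : A} (h : Digraph.iterRel E n a b)
    (hbc : E b c) : Digraph.iterRel E (n + 1) a c := by
  induction n generalizing a with
  | zero => exact ⟨c, h ▸ hbc, rfl⟩
  | succ n ih => obtain ⟨z, hz, h'⟩ := h; exact ⟨z, hz, ih h'⟩

lemma transgen_iter {E : A → A → Prop} {a b : A} (h : Relation.TransGen E a b) :
    ∃ n, Digraph.iterRel E (n + 1) a b := by
  induction h with
  | single h => exact ⟨0, _, h, rfl⟩
  | tail _ h ih => obtain ⟨n, hn⟩ := ih; exact ⟨n + 1, iter_tail hn h⟩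

theorem finite_dag_has_unique_kernel {A : Type*} [Finite A] (E : A → A → Prop)
    (h : Digraph.IsDAG E) : ∃! K : Set A, Digraph.IsKernel E K := by
  have irr : ∀ a, ¬ Relation.TransGen E a a := by
    intro a ha
    obtain ⟨n, hn⟩ := transgen_iter ha
    exact Nat.succ_ne_zero n (h (n + 1) a hn)
  have wfT : WellFounded (fun b a : A => Relation.TransGen E a b) := by
    have : IsTrans A (fun b a : A => Relation.TransGen E a b) :=
      ⟨fun x y z hxy hyz => hyz.trans hxy⟩
    have : IsIrrefl A (fun b a : A => Relation.TransGen E a b) := ⟨fun a => irr a⟩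
    exact Finite.wellFounded_of_trans_of_irrefl _
  have wf : WellFounded (fun b a : A => E a b) :=
    Subrelation.wf (fun hab => Relation.TransGen.single hab) wfT
  set F : ∀ a : A, (∀ b : A, E a b → Prop) → Prop :=
    fun a ih => ∀ b, (hb : E a b) → ¬ ih b hb with hF
  set K : Set A := fun a => wf.fix F a with hK
  have hKeq : ∀ a, K a = ∀ b, E a b → ¬ K b := by
    intro a
    rw [hK]
    simp only
    rw [wf.fix_eq]
  refine ⟨K, ?_, ?_⟩
  · intro a
    rw [(show a ∈ K ↔ K a from Iff.rfl), hKeq a]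
    rfl
  · intro K' hK'
    ext a
    induction a using wf.induction with
    | _ a ih =>
      show a ∈ K' ↔ a ∈ K
      rw [hK' a, (show a ∈ K ↔ K a from Iff.rfl), hKeq a]
      constructor
      · intro h1 b hb hbK
        exact h1 b hb ((ih b hb).mpr hbK)
      · intro h1 b hb hbK
        exact h1 b hb ((ih b hb).mp hbK)
end

section
/- Every well-founded digraph has a kernel. -/
variable {A : Type*}

theorem wf_digraph_has_kernel {A : Type*} (E : A → A → Prop)
    (h : Digraph.WellFoundedDig E) : ∃ K : Set A, Digraph.IsKernel E K := by
  have hwf : WellFounded (fun x y => E y x) := by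
    rw [WellFounded.wellFounded_iff_has_min]
    intro s hs
    obtain ⟨b, hb, hmin⟩ := h s hs
    exact ⟨b, hb, fun x hx => hmin x hx⟩
  refine ⟨{a | hwf.fix (fun a rec => ∀ b (hb : E a b), ¬ rec b hb) a}, fun a => ?_⟩
  have heq := hwf.fix_eq (fun a rec => ∀ b (hb : E a b), ¬ rec b hb) a
  simp only [Set.mem_setOf_eq]
  rw [heq]
end

section
/- Every well-founded digraph has a unique kernel. -/
variable {A : Type*}

theorem wf_digraph_has_unique_kernel {A : Type*} (E : A → A → Prop)
    (h : Digraph.WellFoundedDig E) : ∃! K : Set A, Digraph.IsKernel E K := by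
  have wf : WellFounded (fun x y => E y x) := by
    rw [WellFounded.wellFounded_iff_has_min]
    exact h
  set F : (a : A) → ((b : A) → E a b → Prop) → Prop :=
    fun a ih => ∀ b (hb : E a b), ¬ ih b hb with hF
  set f : A → Prop := wf.fix F with hf
  have key : ∀ a, f a ↔ ∀ b, E a b → ¬ f b := by
    intro a
    rw [hf, wf.fix_eq]
  refine ⟨{a | f a}, fun a => key a, ?_⟩
  intro K hK
  ext a
  induction a using wf.induction with
  | _ a ih =>
    rw [Set.mem_setOf_eq, key a, hK a]
    constructor
    · intro H b hb hbK
      exact H b hb ((ih b hb).mpr hbK)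
    · intro H b hb hbK
      exact H b hb ((ih b hb).mp hbK)
end

section
/- If a digraph (A,E) has a closed subset D such that K_0 ⊆ D is a kernel of the induced digraph on D, and the induced digraph on A \ D is well-founded, then (A,E) has a kernel K with K ∩ D = K_0. -/
variable {A : Type*}

theorem kernel_extension {A : Type*} (E : A → A → Prop) (D K₀ : Set A)
    (hD : Digraph.ClosedSet E D) (hK₀ : Digraph.IsKernelOn E D K₀)
    (hwf : Digraph.WellFoundedOn E (Dᶜ)) :
    ∃ K : Set A, Digraph.IsKernel E K ∧ K ∩ D = K₀ := by
  classical
  have hK₀D : K₀ ⊆ D := hK₀.1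
  have wf : WellFounded (fun c b : {a : A // a ∉ D} => E b.1 c.1) := by
    rw [WellFounded.wellFounded_iff_has_min]
    intro s hs
    obtain ⟨b, hb, hmin⟩ := hwf (Subtype.val '' s)
      (by rintro x ⟨y, hy, rfl⟩; exact y.2) (hs.image _)
    obtain ⟨b', hb's, rfl⟩ := hb
    exact ⟨b', hb's, fun c hc hE => hmin c.1 ⟨c, hc, rfl⟩ hE⟩
  let f : {a : A // a ∉ D} → Prop :=
    wf.fix (fun b ih =>
      ∀ c, (h : E b.1 c) → if hc : c ∈ D then c ∉ K₀ else ¬ ih ⟨c, hc⟩ h)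
  have hf : ∀ b, f b ↔
      ∀ c, (h : E b.1 c) → if hc : c ∈ D then c ∉ K₀ else ¬ f ⟨c, hc⟩ := by
    intro b
    conv_lhs => rw [show f = wf.fix _ from rfl, wf.fix_eq]
  refine ⟨K₀ ∪ {a | ∃ h : a ∉ D, f ⟨a, h⟩}, ?_, ?_⟩
  · have memK : ∀ c, c ∈ K₀ ∪ {a | ∃ h : a ∉ D, f ⟨a, h⟩} ↔
        (if hc : c ∈ D then c ∈ K₀ else f ⟨c, hc⟩) := by
      intro c
      by_cases hc : c ∈ D
      · simp only [dif_pos hc]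
        constructor
        · rintro (h | ⟨h, _⟩)
          · exact h
          · exact absurd hc h
        · exact Or.inl
      · simp only [dif_neg hc]
        constructor
        · rintro (h | ⟨h, hfc⟩)
          · exact absurd (hK₀D h) hc
          · exact hfc
        · exact fun h => Or.inr ⟨hc, h⟩
    intro a
    rw [memK]
    by_cases ha : a ∈ D
    · rw [dif_pos ha, hK₀.2 a ha]
      constructor
      · intro h b hab hbK
        have hbD : b ∈ D := hD a ha b hab
        rw [memK, dif_pos hbD] at hbK
        exact h b hbD hab hbK
      · intro h c hcD hac hcK
        exact h c hac ((memK c).mpr (by rw [dif_pos hcD]; exact hcK))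
    · rw [dif_neg ha, hf]
      constructor
      · intro h b hab hbK
        rw [memK] at hbK
        have := h b hab
        by_cases hb : b ∈ D
        · rw [dif_pos hb] at this hbK; exact this hbK
        · rw [dif_neg hb] at this hbK; exact this hbK
      · intro h c hac
        have := h c hac
        rw [memK] at this
        by_cases hc : c ∈ D
        · rw [dif_pos hc] at this ⊢; exact this
        · rw [dif_neg hc] at this ⊢; exact this
  · ext x
    simp only [Set.mem_inter_iff, Set.mem_union, Set.mem_setOf_eq]
    constructor
    · rintro ⟨(h | ⟨h, _⟩), hxD⟩
      · exact h
      · exact absurd hxD h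
    · exact fun h => ⟨Or.inl h, hK₀D h⟩
end

section
/- Under the hypotheses of Proposition 1, the kernel K of (A,E) extending K_0 (i.e., with K ∩ D = K_0) is unique. -/
variable {A : Type*}

theorem kernel_extension_unique {A : Type*} (E : A → A → Prop) (D K₀ : Set A)
    (hD : Digraph.ClosedSet E D) (hK₀ : Digraph.IsKernelOn E D K₀)
    (hwf : Digraph.WellFoundedOn E (Dᶜ))
    (K K' : Set A) (hK : Digraph.IsKernel E K) (hK' : Digraph.IsKernel E K')
    (hKD : K ∩ D = K₀) (hK'D : K' ∩ D = K₀) : K = K' := by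
  have agreeD : ∀ a ∈ D, (a ∈ K ↔ a ∈ K') := by
    intro a ha
    constructor
    · intro h
      have h1 : a ∈ K₀ := hKD ▸ (⟨h, ha⟩ : a ∈ K ∩ D)
      have h2 : a ∈ K' ∩ D := hK'D ▸ h1
      exact h2.1
    · intro h
      have h1 : a ∈ K₀ := hK'D ▸ (⟨h, ha⟩ : a ∈ K' ∩ D)
      have h2 : a ∈ K ∩ D := hKD ▸ h1
      exact h2.1
  by_contra hne
  have hSne : ∃ a, ¬ (a ∈ K ↔ a ∈ K') := by
    by_contra h
    push_neg at h
    exact hne (Set.ext fun a => (h a))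
  set S : Set A := {a | ¬ (a ∈ K ↔ a ∈ K')} with hSdef
  have hSsub : S ⊆ Dᶜ := fun a ha haD => ha (agreeD a haD)
  obtain ⟨b, hbS, hbmin⟩ := hwf S hSsub hSne
  -- WLOG-style: handle both directions symmetrically
  have key : ∀ (X Y : Set A), Digraph.IsKernel E X → Digraph.IsKernel E Y →
      ({a | ¬ (a ∈ X ↔ a ∈ Y)} = S) → b ∈ X → b ∉ Y → False := by
    intro X Y hX hY hSeq hbX hbY
    have : ¬ ∀ c, E b c → c ∉ Y := fun h => hbY ((hY b).2 h)
    push_neg at this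
    obtain ⟨c, hbc, hcY⟩ := this
    have hcX : c ∉ X := fun hcX => ((hX b).1 hbX c hbc) hcX
    have hcS : c ∈ S := by
      rw [← hSeq]
      intro hiff
      exact hcX (hiff.2 hcY)
    exact hbmin c hcS hbc
  by_cases hbK : b ∈ K
  · have hbK' : b ∉ K' := fun h => hbS (iff_of_true hbK h)
    exact key K K' hK hK' rfl hbK hbK'
  · have hbK' : b ∈ K' := by
      by_contra h
      exact hbS (iff_of_false hbK h)
    refine key K' K hK' hK ?_ hbK' hbK
    ext a
    simp only [Set.mem_setOf_eq, hSdef]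
    exact not_congr iff_comm
end

section
/- In the digraph of sentences where edges go from a sentence to its immediate subsentences (NOR components or quantifier instances), a subset S is a kernel of the sub-digraph A of sentences σ such that (σ atomic → σ true in M) if and only if S is a full truth class for M. -/
variable {A : Type*}

inductive Sent (Atom C : Type*) where
  | atom : Atom → Sent Atom C
  | nor : Sent Atom C → Sent Atom C → Sent Atom C
  | nquant : (C → Sent Atom C) → Sent Atom C

def sentE {Atom C : Type*} : Sent Atom C → Sent Atom C → Prop
  | Sent.nor σ₀ σ₁, τ => τ = σ₀ ∨ τ = σ₁
  | Sent.nquant φ, τ => ∃ c, τ = φ c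
  | Sent.atom _, _ => False

/-- S is a full truth class for the model whose atomic truth valuation is v. -/
def IsFullTruthClass {Atom C : Type*} (v : Atom → Prop) (S : Set (Sent Atom C)) : Prop :=
  (∀ σ₀ σ₁ : Sent Atom C, Sent.nor σ₀ σ₁ ∈ S ↔ (σ₀ ∉ S ∧ σ₁ ∉ S)) ∧
  (∀ φ : C → Sent Atom C, Sent.nquant φ ∈ S ↔ ∀ c : C, φ c ∉ S) ∧
  (∀ a : Atom, Sent.atom a ∈ S ↔ v a)

theorem truth_class_iff_kernel {Atom C : Type*} (v : Atom → Prop)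
    (S : Set (Sent Atom C)) :
    Digraph.IsKernelOn sentE {σ : Sent Atom C | ∀ a : Atom, σ = Sent.atom a → v a} S ↔
      IsFullTruthClass v S := by
  set B : Set (Sent Atom C) := {σ : Sent Atom C | ∀ a : Atom, σ = Sent.atom a → v a}
  constructor
  · rintro ⟨hsub, hker⟩
    refine ⟨fun σ₀ σ₁ => ?_, fun φ => ?_, fun a => ?_⟩
    · have hB : Sent.nor σ₀ σ₁ ∈ B := fun a h => by cases h
      rw [hker _ hB]
      constructor
      · intro h
        exact ⟨fun h0 => h σ₀ (hsub h0) (Or.inl rfl) h0,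
               fun h1 => h σ₁ (hsub h1) (Or.inr rfl) h1⟩
      · rintro ⟨h0, h1⟩ c _ (rfl | rfl) <;> assumption
    · have hB : Sent.nquant φ ∈ B := fun a h => by cases h
      rw [hker _ hB]
      constructor
      · intro h c hc
        exact h (φ c) (hsub hc) ⟨c, rfl⟩ hc
      · rintro h c _ ⟨c', rfl⟩
        exact h c'
    · constructor
      · intro h
        exact hsub h a rfl
      · intro hv
        have hB : Sent.atom a ∈ B := fun a' h => by cases h; exact hv
        rw [hker _ hB]
        intro c _ hc
        cases hc
  · rintro ⟨hnor, hnq, hatom⟩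
    have hsub : S ⊆ B := by
      intro σ hσ a h
      subst h
      exact (hatom a).1 hσ
    refine ⟨hsub, fun b hb => ?_⟩
    cases b with
    | atom a =>
      constructor
      · intro _ c _ hc
        cases hc
      · intro _
        exact (hatom a).2 (hb a rfl)
    | nor σ₀ σ₁ =>
      rw [hnor]
      constructor
      · rintro ⟨h0, h1⟩ c _ (rfl | rfl) <;> assumption
      · intro h
        exact ⟨fun h0 => h σ₀ (hsub h0) (Or.inl rfl) h0,
               fun h1 => h σ₁ (hsub h1) (Or.inr rfl) h1⟩
    | nquant φ =>
      rw [hnq]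
      constructor
      · rintro h c _ ⟨c', rfl⟩
        exact h c'
      · intro h c hc
        exact h (φ c) (hsub hc) ⟨c, rfl⟩ hc
end

section
/- Having local finite height is preserved under elementary equivalence: if digraphs (A,E) and (B,F) are elementarily equivalent and (A,E) has local finite height, then (B,F) has local finite height. -/
variable {A : Type*}

def digraphStructure {A : Type*} (E : A → A → Prop) :
    FirstOrder.Language.graph.Structure A where
  funMap := fun f => f.elim
  RelMap | .adj => fun x => E (x 0) (x 1)

/-! ### Auxiliary material -/

open FirstOrder FirstOrder.Language

namespace LFH

variable {E : A → A → Prop}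

/-! #### Combinatorial lemmas about `iterRel`, `Cl`, `HtLe` -/

lemma iterRel_iff (E : A → A → Prop) (n : ℕ) (a b : A) :
    Digraph.iterRel E n a b ↔
      ∃ c : ℕ → A, c 0 = a ∧ c n = b ∧ ∀ i < n, E (c i) (c (i+1)) := by
  induction n generalizing a with
  | zero =>
    constructor
    · rintro (rfl : a = b); exact ⟨fun _ => a, rfl, rfl, by omega⟩
    · rintro ⟨c, h1, h2, -⟩; show a = b; exact h1.symm.trans h2
  | succ n ih =>
    constructor
    · rintro ⟨z, hz, hiter⟩
      obtain ⟨c, hc0, hcn, hstep⟩ := (ih z).1 hiter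
      refine ⟨fun i => if i = 0 then a else c (i - 1), by simp, by simp [hcn], ?_⟩
      intro i hi
      rcases Nat.eq_zero_or_pos i with rfl | hpos
      · simpa [hc0] using hz
      · have h1 : ¬ (i = 0) := by omega
        have h2 : ¬ (i + 1 = 0) := by omega
        simp only [h1, h2, if_false]
        have h3 : i + 1 - 1 = (i - 1) + 1 := by omega
        rw [h3]
        exact hstep (i - 1) (by omega)
    · rintro ⟨c, rfl, hcn, hstep⟩
      refine ⟨c 1, hstep 0 (by omega), (ih (c 1)).2 ⟨fun i => c (i + 1), rfl, hcn, ?_⟩⟩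
      intro i hi; exact hstep (i + 1) (by omega)

lemma cl_subset_succ (X : Set A) (m : ℕ) :
    Digraph.Cl E X m ⊆ Digraph.Cl E X (m + 1) := by
  induction m with
  | zero => exact Set.subset_union_left
  | succ m ih =>
    intro a ha
    rcases ha with ha | ⟨d, hd, hda⟩
    · exact Or.inl ha
    · exact Or.inr ⟨d, ih hd, hda⟩

lemma cl_empty (m : ℕ) : Digraph.Cl E (∅ : Set A) m = ∅ := by
  induction m with
  | zero => rfl
  | succ m ih => simp [Digraph.Cl, ih]

lemma mem_cl_iff (X : Set A) (m : ℕ) (a : A) :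
    a ∈ Digraph.Cl E X m ↔ ∃ w : ℕ → A, w 0 ∈ X ∧ w m = a ∧
      ∀ j < m, w j = w (j+1) ∨ E (w j) (w (j+1)) := by
  induction m generalizing a with
  | zero =>
    constructor
    · intro ha; exact ⟨fun _ => a, ha, rfl, by omega⟩
    · rintro ⟨w, hw0, rfl, -⟩; exact hw0
  | succ m ih =>
    constructor
    · rintro (ha | ⟨d, hd, hda⟩)
      · exact ⟨fun _ => a, ha, rfl, fun j _ => Or.inl rfl⟩
      · obtain ⟨w, hw0, hwm, hstep⟩ := (ih d).1 hd
        refine ⟨fun i => if i ≤ m then w i else a, by simp [hw0], by simp, ?_⟩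
        intro j hj
        rcases Nat.lt_or_ge j m with hlt | hge
        · have h1 : j ≤ m := by omega
          have h2 : j + 1 ≤ m := by omega
          simpa [h1, h2] using hstep j hlt
        · have hj' : j = m := by omega
          subst hj'
          have h1 : j ≤ j := le_refl _
          have h2 : ¬ (j + 1 ≤ j) := by omega
          simp only [h1, if_true, h2, if_false, hwm]
          exact Or.inr hda
    · rintro ⟨w, hw0, hwm, hstep⟩
      have hmem : w m ∈ Digraph.Cl E X m :=
        (ih (w m)).2 ⟨w, hw0, rfl, fun j hj => hstep j (by omega)⟩
      rcases hstep m (by omega) with heq | hE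
      · exact cl_subset_succ X m (by rw [← hwm, ← heq]; exact hmem)
      · exact Or.inr ⟨w m, hmem, by rwa [hwm] at hE⟩

lemma mem_cl_fin (X : Set A) (m : ℕ) (a : A) :
    a ∈ Digraph.Cl E X m ↔ ∃ w : Fin (m+1) → A, w 0 ∈ X ∧ w (Fin.last m) = a ∧
      ∀ j : Fin m, w j.castSucc = w j.succ ∨ E (w j.castSucc) (w j.succ) := by
  rw [mem_cl_iff]
  constructor
  · rintro ⟨w, hw0, hwm, hstep⟩
    refine ⟨fun j => w j.val, by simpa using hw0, by simpa using hwm, ?_⟩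
    intro j
    simpa using hstep j.val j.2
  · rintro ⟨w, hw0, hwm, hstep⟩
    refine ⟨fun i => if h : i < m + 1 then w ⟨i, h⟩ else a, ?_, ?_, ?_⟩
    · have h0 : (0 : ℕ) < m + 1 := by omega
      simpa [h0, show (⟨0, h0⟩ : Fin (m+1)) = 0 from rfl] using hw0
    · have hm : m < m + 1 := by omega
      simpa [hm, show (⟨m, hm⟩ : Fin (m+1)) = Fin.last m from rfl] using hwm
    · intro j hj
      have h1 : j < m + 1 := by omega
      have h2 : j + 1 < m + 1 := by omega
      have e1 : (⟨j, h1⟩ : Fin (m+1)) = (⟨j, hj⟩ : Fin m).castSucc := rfl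
      have e2 : (⟨j + 1, h2⟩ : Fin (m+1)) = (⟨j, hj⟩ : Fin m).succ := rfl
      simp only [h1, h2, dif_pos, e1, e2]
      exact hstep ⟨j, hj⟩

lemma htLe_iff (E : A → A → Prop) (B : Set A) (k : ℕ) :
    Digraph.HtLe E B k ↔ ∀ c : Fin (k+2) → A, (∀ i, c i ∈ B) →
      (∀ i : Fin (k+1), E (c i.castSucc) (c i.succ)) → False := by
  constructor
  · intro h c hmem hedge
    apply h (c 0) (c (Fin.last (k+1)))
    rw [iterRel_iff]
    refine ⟨fun i => if h : i < k + 2 then c ⟨i, h⟩ else c 0, by simp, ?_, ?_⟩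
    · have hlt : k + 1 < k + 2 := by omega
      simp only [hlt, dif_pos]
      rfl
    · intro i hi
      have h1 : i < k + 2 := by omega
      have h2 : i + 1 < k + 2 := by omega
      simp only [h1, h2, dif_pos]
      refine ⟨hmem _, hmem _, ?_⟩
      have e1 : (⟨i, h1⟩ : Fin (k+2)) = (⟨i, hi⟩ : Fin (k+1)).castSucc := rfl
      have e2 : (⟨i + 1, h2⟩ : Fin (k+2)) = (⟨i, hi⟩ : Fin (k+1)).succ := rfl
      rw [e1, e2]
      exact hedge ⟨i, hi⟩
  · intro h a b hiter
    rw [iterRel_iff] at hiter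
    obtain ⟨cc, hc0, hcn, hstep⟩ := hiter
    refine h (fun i => cc i.val) ?_ ?_
    · intro i
      rcases Nat.lt_or_ge i.val (k + 1) with hlt | hge
      · exact (hstep i.val hlt).1
      · have hv : i.val = k + 1 := by omega
        show cc i.val ∈ B
        rw [hv]
        exact (hstep k (by omega)).2.1
    · intro i
      simpa using (hstep i.val i.2).2.2

lemma ncard_range_le {m : ℕ} (g : Fin m → A) : (Set.range g).ncard ≤ m := by
  classical
  have h : Set.range g = ↑(Finset.image g Finset.univ) := by ext x; simp
  rw [h, Set.ncard_coe_finset]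
  exact (Finset.card_image_le).trans (by simp)

lemma exists_range_eq {F : Set A} (hF : F.Finite) (hne : F.Nonempty) {m : ℕ}
    (hm : F.ncard ≤ m) : ∃ g : Fin m → A, Set.range g = F := by
  haveI := hF.fintype
  obtain ⟨a0, ha0⟩ := hne
  have hcard : F.ncard = Fintype.card F := by
    rw [Set.ncard_eq_toFinset_card', Set.toFinset_card]
  let e := Fintype.equivFin F
  refine ⟨fun i => if h : (i : ℕ) < Fintype.card F then (e.symm ⟨i, h⟩ : A) else a0, ?_⟩
  ext x
  constructor
  · rintro ⟨i, rfl⟩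
    dsimp only
    split
    · exact (e.symm _).2
    · exact ha0
  · intro hx
    have hj : ((e ⟨x, hx⟩ : Fin (Fintype.card F)) : ℕ) < Fintype.card F := (e ⟨x, hx⟩).2
    have hjm : ((e ⟨x, hx⟩ : Fin (Fintype.card F)) : ℕ) < m :=
      lt_of_lt_of_le hj (hcard ▸ hm)
    refine ⟨⟨(e ⟨x, hx⟩ : Fin (Fintype.card F)), hjm⟩, ?_⟩
    dsimp only
    rw [dif_pos hj]
    have : (⟨((e ⟨x, hx⟩ : Fin (Fintype.card F)) : ℕ), hj⟩ : Fin (Fintype.card F))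
        = e ⟨x, hx⟩ := Fin.ext rfl
    rw [this, Equiv.symm_apply_apply]

/-! #### The first-order sentence -/

/-- The free-variable type for the sentence: `m` generators, a chain of `k+2` points,
and a witness path of length `m` for each chain point. -/
abbrev Vt (m k : ℕ) := Fin m ⊕ (Fin (k+2) ⊕ (Fin (k+2) × Fin (m+1)))

noncomputable def eqF {α : Type} (a b : α) : Language.graph.Formula α :=
  Term.equal (Term.var a) (Term.var b)

noncomputable def adjF {α : Type} (a b : α) : Language.graph.Formula α :=
  Relations.formula₂ .adj (Term.var a) (Term.var b)

noncomputable def inner (m k : ℕ) : Language.graph.Formula (Vt m k) :=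
  (BoundedFormula.iInf fun i : Fin (k+2) =>
      eqF (Sum.inr (Sum.inr (i, Fin.last m))) (Sum.inr (Sum.inl i))) ⊓
  ((BoundedFormula.iInf fun i : Fin (k+2) =>
      BoundedFormula.iSup fun t : Fin m =>
        eqF (Sum.inr (Sum.inr (i, (0 : Fin (m+1))))) (Sum.inl t)) ⊓
  ((BoundedFormula.iInf fun p : Fin (k+2) × Fin m =>
      eqF (Sum.inr (Sum.inr (p.1, p.2.castSucc))) (Sum.inr (Sum.inr (p.1, p.2.succ))) ⊔
      adjF (Sum.inr (Sum.inr (p.1, p.2.castSucc))) (Sum.inr (Sum.inr (p.1, p.2.succ)))) ⊓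
  (BoundedFormula.iInf fun i : Fin (k+1) =>
      adjF (Sum.inr (Sum.inl i.castSucc)) (Sum.inr (Sum.inl i.succ)))))

noncomputable def sent (m k : ℕ) : Language.graph.Sentence :=
  Formula.iAlls (Vt m k) ((inner m k).not.relabel Sum.inr)

/-- Semantic content of `sent m k`. -/
def QQ {A : Type*} (E : A → A → Prop) (m k : ℕ) : Prop :=
  ∀ v : Vt m k → A,
    ¬ ((∀ i : Fin (k+2), v (Sum.inr (Sum.inr (i, Fin.last m))) = v (Sum.inr (Sum.inl i))) ∧
      ((∀ i : Fin (k+2), ∃ t : Fin m, v (Sum.inr (Sum.inr (i, (0 : Fin (m+1))))) = v (Sum.inl t)) ∧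
      ((∀ p : Fin (k+2) × Fin m,
          v (Sum.inr (Sum.inr (p.1, p.2.castSucc))) = v (Sum.inr (Sum.inr (p.1, p.2.succ))) ∨
          E (v (Sum.inr (Sum.inr (p.1, p.2.castSucc)))) (v (Sum.inr (Sum.inr (p.1, p.2.succ))))) ∧
      (∀ i : Fin (k+1),
          E (v (Sum.inr (Sum.inl i.castSucc))) (v (Sum.inr (Sum.inl i.succ)))))))

lemma brealize_eqF {A : Type*} [Language.graph.Structure A] {α : Type} (a b : α)
    (v : α → A) (xs : Fin 0 → A) :
    BoundedFormula.Realize (eqF a b : Language.graph.Formula α) v xs ↔ v a = v b := by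
  simp [eqF, Term.equal]

lemma brealize_adjF {A : Type*} (E : A → A → Prop) {α : Type} (a b : α)
    (v : α → A) (xs : Fin 0 → A) :
    (letI := digraphStructure E;
      BoundedFormula.Realize (adjF a b : Language.graph.Formula α) v xs) ↔ E (v a) (v b) := by
  letI := digraphStructure E
  simp only [adjF, Relations.formula₂, Relations.formula, BoundedFormula.realize_rel]
  show E _ _ ↔ _
  simp

lemma realize_sent {A : Type*} (E : A → A → Prop) (m k : ℕ) :
    (letI := digraphStructure E; Sentence.Realize A (sent m k)) ↔ QQ E m k := by
  letI := digraphStructure E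
  rw [sent, Sentence.Realize, Formula.realize_iAlls]
  apply forall_congr'
  intro v
  rw [Formula.realize_relabel, Formula.realize_not]
  rw [show ((fun a => Sum.elim (default : Empty → A) v a) ∘ Sum.inr) = v from rfl]
  apply not_congr
  show BoundedFormula.Realize (inner m k) v default ↔ _
  simp only [inner, BoundedFormula.realize_inf, BoundedFormula.realize_iInf,
    BoundedFormula.realize_iSup, BoundedFormula.realize_sup, brealize_eqF, brealize_adjF E,
    Finset.mem_univ, true_implies, exists_prop, true_and]

/-! #### Bridging `QQ` and the height property -/

lemma forward (E : A → A → Prop) {m k : ℕ}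
    (H : ∀ F : Set A, F.Finite → F.ncard ≤ m → Digraph.HtLe E (Digraph.Cl E F m) k) :
    QQ E m k := by
  rintro v ⟨h1, h2, h3, h4⟩
  have hht := H (Set.range fun t => v (Sum.inl t)) (Set.finite_range _) (ncard_range_le _)
  rw [htLe_iff] at hht
  refine hht (fun i => v (Sum.inr (Sum.inl i))) ?_ h4
  intro i
  rw [mem_cl_fin]
  refine ⟨fun j => v (Sum.inr (Sum.inr (i, j))), ?_, h1 i, fun j => h3 (i, j)⟩
  obtain ⟨t, ht⟩ := h2 i
  exact ⟨t, ht.symm⟩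

lemma backward (E : A → A → Prop) {m k : ℕ} (H : QQ E m k) :
    ∀ F : Set A, F.Finite → F.ncard ≤ m → Digraph.HtLe E (Digraph.Cl E F m) k := by
  intro F hF hm
  rw [htLe_iff]
  intro c hmem hedge
  rcases F.eq_empty_or_nonempty with rfl | hne
  · rw [cl_empty] at hmem
    exact (hmem 0).elim
  · obtain ⟨g, hg⟩ := exists_range_eq hF hne hm
    choose w hw0 hwl hws using fun i => (mem_cl_fin F m (c i)).1 (hmem i)
    refine H (Sum.elim g (Sum.elim c (fun p => w p.1 p.2))) ⟨fun i => hwl i, fun i => ?_,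
      fun p => hws p.1 p.2, hedge⟩
    have : w i 0 ∈ Set.range g := hg ▸ hw0 i
    obtain ⟨t, ht⟩ := this
    exact ⟨t, ht.symm⟩

end LFH

theorem localFiniteHeight_elemEquiv {A B : Type*} (E : A → A → Prop) (F : B → B → Prop)
    (h : letI := digraphStructure E; letI := digraphStructure F;
      FirstOrder.Language.graph.ElementarilyEquivalent A B)
    (hA : Digraph.LocalFiniteHeight E) : Digraph.LocalFiniteHeight F := by
  intro m
  obtain ⟨k, hk⟩ := hA m
  refine ⟨k, ?_⟩
  have hQ : LFH.QQ E m k := LFH.forward E hk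
  have hs : (letI := digraphStructure E; Sentence.Realize A (LFH.sent m k)) :=
    (LFH.realize_sent E m k).2 hQ
  have hsB : (letI := digraphStructure F; Sentence.Realize B (LFH.sent m k)) := by
    letI := digraphStructure E
    letI := digraphStructure F
    exact (h.realize_sentence (LFH.sent m k)).1 hs
  exact LFH.backward F ((LFH.realize_sent F m k).1 hsB)
end

section
/- If K₁ and K₂ are kernels of a well-founded digraph (A,E), then K₁ = K₂. -/
variable {A : Type*}

theorem wf_kernels_eq {A : Type*} (E : A → A → Prop)
    (h : Digraph.WellFoundedDig E) (K₁ K₂ : Set A)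
    (h₁ : Digraph.IsKernel E K₁) (h₂ : Digraph.IsKernel E K₂) : K₁ = K₂ := by
  by_contra hne
  have hS : (symmDiff K₁ K₂).Nonempty := by
    rw [Set.nonempty_iff_ne_empty]
    intro he
    exact hne (symmDiff_eq_bot.mp he)
  obtain ⟨b, hb, hmin⟩ := h _ hS
  have key : ∀ (X Y : Set A), Digraph.IsKernel E X → Digraph.IsKernel E Y →
      (∀ c, c ∈ Y \ X → c ∈ symmDiff K₁ K₂) → b ∈ X \ Y → False := by
    intro X Y hX hY hsd ⟨hbX, hbY⟩
    have : ¬ ∀ c, E b c → c ∉ Y := fun hc => hbY ((hY b).mpr hc)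
    push_neg at this
    obtain ⟨c, hbc, hcY⟩ := this
    have hcX : c ∉ X := (hX b).mp hbX c hbc
    exact hmin c (hsd c ⟨hcY, hcX⟩) hbc
  rcases Set.mem_symmDiff.mp hb with h'|h'
  · exact key K₁ K₂ h₁ h₂ (fun c hc => Set.mem_symmDiff.mpr (Or.inr ⟨hc.1, hc.2⟩)) h'
  · exact key K₂ K₁ h₂ h₁ (fun c hc => Set.mem_symmDiff.mpr (Or.inl ⟨hc.1, hc.2⟩)) h'
end
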